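/- Suppose f in Z[x_1,...,x_ℓ] is symmetric in x_i and x_{i+1} for all a < i ≤ ℓ-1 (for some fixed a in [ℓ-1]). Then x_ℓ · π_{ℓ-1}π_{ℓ-2}···π_a(f) = (π_{ℓ-1}-1)(π_{ℓ-2}-1)···(π_a-1)(x_a·f), and moreover this equals (π_{ℓ-1}-1)π_{ℓ-2}···π_a(x_a·f). -/
import Mathlib


open MvPolynomial

noncomputable section

abbrev Kf (ℓ : ℕ) : Type := FractionRing (MvPolynomial (Fin ℓ) ℤ)

noncomputable def Xv (ℓ : ℕ) (i : ℕ) : Kf ℓ :=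
  if h : i < ℓ then algebraMap (MvPolynomial (Fin ℓ) ℤ) (Kf ℓ) (X ⟨i, h⟩) else 1

noncomputable def swapAlg (ℓ i : ℕ) :
    MvPolynomial (Fin ℓ) ℤ ≃ₐ[ℤ] MvPolynomial (Fin ℓ) ℤ :=
  if h : i + 1 < ℓ then
    renameEquiv ℤ (Equiv.swap ⟨i, Nat.lt_of_succ_lt h⟩ ⟨i + 1, h⟩)
  else AlgEquiv.refl

noncomputable def swapK (ℓ i : ℕ) : Kf ℓ →+* Kf ℓ :=
  IsFractionRing.lift (g := (algebraMap (MvPolynomial (Fin ℓ) ℤ) (Kf ℓ)).comp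
      (swapAlg ℓ i).toAlgHom.toRingHom)
    (by rw [RingHom.coe_comp]
        exact (IsFractionRing.injective _ _).comp (swapAlg ℓ i).injective)

noncomputable def dem (ℓ i : ℕ) (f : Kf ℓ) : Kf ℓ :=
  (Xv ℓ i * f - Xv ℓ (i + 1) * swapK ℓ i f) / (Xv ℓ i - Xv ℓ (i + 1))

lemma swapK_algebraMap (ℓ i : ℕ) (p : MvPolynomial (Fin ℓ) ℤ) :
    swapK ℓ i (algebraMap (MvPolynomial (Fin ℓ) ℤ) (Kf ℓ) p) =
      algebraMap (MvPolynomial (Fin ℓ) ℤ) (Kf ℓ) (swapAlg ℓ i p) :=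
  IsLocalization.lift_eq _ _

lemma Xv_sub_ne (ℓ i : ℕ) (h : i + 1 < ℓ) : Xv ℓ i - Xv ℓ (i + 1) ≠ 0 := by
  rw [sub_ne_zero, Xv, Xv, dif_pos (Nat.lt_of_succ_lt h), dif_pos h]
  intro hc
  have := IsFractionRing.injective (MvPolynomial (Fin ℓ) ℤ) (Kf ℓ) hc
  have := X_injective this
  simp [Fin.ext_iff] at this

lemma swapAlg_X (ℓ i t : ℕ) (h : i + 1 < ℓ) (ht : t < ℓ) :
    swapAlg ℓ i (X ⟨t, ht⟩) =
      X (Equiv.swap ⟨i, Nat.lt_of_succ_lt h⟩ ⟨i + 1, h⟩ ⟨t, ht⟩) := by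
  rw [swapAlg, dif_pos h]
  simp [renameEquiv_apply, rename_X]

lemma swapK_Xv_left (ℓ i : ℕ) (h : i + 1 < ℓ) :
    swapK ℓ i (Xv ℓ i) = Xv ℓ (i + 1) := by
  rw [Xv, dif_pos (Nat.lt_of_succ_lt h), swapK_algebraMap, swapAlg_X ℓ i i h,
    Equiv.swap_apply_left, Xv, dif_pos h]

lemma swapK_Xv_right (ℓ i : ℕ) (h : i + 1 < ℓ) :
    swapK ℓ i (Xv ℓ (i + 1)) = Xv ℓ i := by
  rw [Xv, dif_pos h, swapK_algebraMap, swapAlg_X ℓ i (i+1) h,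
    Equiv.swap_apply_right, Xv, dif_pos (Nat.lt_of_succ_lt h)]

lemma swapK_Xv_other (ℓ i t : ℕ) (h : i + 1 < ℓ) (h1 : t ≠ i) (h2 : t ≠ i + 1) :
    swapK ℓ i (Xv ℓ t) = Xv ℓ t := by
  by_cases ht : t < ℓ
  · simp only [Xv, dif_pos ht]
    rw [swapK_algebraMap, swapAlg_X ℓ i t h,
      Equiv.swap_apply_of_ne_of_ne (by simp [Fin.ext_iff, h1]) (by simp [Fin.ext_iff, h2])]
  · simp only [Xv, dif_neg ht, map_one]

lemma dem_add (ℓ i : ℕ) (g h : Kf ℓ) : dem ℓ i (g + h) = dem ℓ i g + dem ℓ i h := by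
  simp only [dem, map_add]; ring

lemma dem_zero (ℓ i : ℕ) : dem ℓ i 0 = 0 := by simp [dem]

lemma dem_invariant (ℓ i : ℕ) (h : i + 1 < ℓ) (g : Kf ℓ) (hg : swapK ℓ i g = g) :
    dem ℓ i g = g := by
  rw [dem, hg, div_eq_iff (Xv_sub_ne ℓ i h)]; ring

lemma dem_mul_X (ℓ i : ℕ) (h : i + 1 < ℓ) (g : Kf ℓ) :
    dem ℓ i (Xv ℓ i * g) = Xv ℓ (i + 1) * dem ℓ i g + Xv ℓ i * g := by
  have hne := Xv_sub_ne ℓ i h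
  rw [dem, dem, map_mul, swapK_Xv_left ℓ i h, mul_div_assoc', div_add' _ _ _ hne,
    div_eq_div_iff hne hne]
  ring

lemma swapAlg_comm (ℓ i m : ℕ) (hi : i + 1 < ℓ) (hm : m + 1 < ℓ) (him : i + 2 ≤ m)
    (p : MvPolynomial (Fin ℓ) ℤ) :
    swapAlg ℓ m (swapAlg ℓ i p) = swapAlg ℓ i (swapAlg ℓ m p) := by
  simp only [swapAlg, dif_pos hi, dif_pos hm, renameEquiv_apply, rename_rename]
  have hfun : (⇑(Equiv.swap (⟨m, Nat.lt_of_succ_lt hm⟩ : Fin ℓ) ⟨m + 1, hm⟩) ∘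
      ⇑(Equiv.swap (⟨i, Nat.lt_of_succ_lt hi⟩ : Fin ℓ) ⟨i + 1, hi⟩)) =
      (⇑(Equiv.swap (⟨i, Nat.lt_of_succ_lt hi⟩ : Fin ℓ) ⟨i + 1, hi⟩) ∘
      ⇑(Equiv.swap (⟨m, Nat.lt_of_succ_lt hm⟩ : Fin ℓ) ⟨m + 1, hm⟩)) := by
    funext x
    simp only [Function.comp_apply, Equiv.swap_apply_def]
    obtain ⟨x, hx⟩ := x
    split_ifs <;> simp only [Fin.ext_iff] at * <;> omega
  rw [hfun]

lemma swapK_comm (ℓ i m : ℕ) (hi : i + 1 < ℓ) (hm : m + 1 < ℓ) (him : i + 2 ≤ m)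
    (g : Kf ℓ) :
    swapK ℓ m (swapK ℓ i g) = swapK ℓ i (swapK ℓ m g) := by
  have key : (swapK ℓ m).comp (swapK ℓ i) = (swapK ℓ i).comp (swapK ℓ m) := by
    apply IsLocalization.ringHom_ext (nonZeroDivisors (MvPolynomial (Fin ℓ) ℤ))
    apply RingHom.ext
    intro p
    simp only [RingHom.comp_apply]
    rw [swapK_algebraMap, swapK_algebraMap, swapK_algebraMap, swapK_algebraMap,
      swapAlg_comm ℓ i m hi hm him]
  exact RingHom.congr_fun key g

lemma swapK_dem (ℓ i m : ℕ) (hi : i + 1 < ℓ) (hm : m + 1 < ℓ) (him : i + 2 ≤ m)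
    (g : Kf ℓ) :
    swapK ℓ m (dem ℓ i g) = dem ℓ i (swapK ℓ m g) := by
  rw [dem, dem, map_div₀, map_sub, map_mul, map_mul, map_sub,
    swapK_Xv_other ℓ m i hm (by omega) (by omega),
    swapK_Xv_other ℓ m (i+1) hm (by omega) (by omega),
    swapK_comm ℓ i m hi hm him]

/-- `demUp ℓ a n f = π_{a+n-1} ⋯ π_{a+1} π_a (f)` (the chain of Demazure operators
with indices `a, a+1, …, a+n-1`, applied with `π_a` acting first). -/
noncomputable def demUp (ℓ a : ℕ) : ℕ → Kf ℓ → Kf ℓ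
  | 0, f => f
  | n + 1, f => dem ℓ (a + n) (demUp ℓ a n f)

/-- `hdemUp ℓ a n f = (π_{a+n-1}-1) ⋯ (π_{a+1}-1)(π_a-1)(f)` (the chain of the
operators `π̂_i = π_i - 1` with indices `a, …, a+n-1`, `π̂_a` acting first). -/
noncomputable def hdemUp (ℓ a : ℕ) : ℕ → Kf ℓ → Kf ℓ
  | 0, f => f
  | n + 1, f => dem ℓ (a + n) (hdemUp ℓ a n f) - hdemUp ℓ a n f

lemma swapK_demUp (ℓ a : ℕ) : ∀ (k m : ℕ), a + k + 1 ≤ m → m + 1 < ℓ →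
    ∀ g : Kf ℓ, swapK ℓ m g = g → swapK ℓ m (demUp ℓ a k g) = demUp ℓ a k g
  | 0, m, _, _, g, hg => hg
  | k + 1, m, hkm, hm, g, hg => by
    rw [demUp, swapK_dem ℓ (a + k) m (by omega) hm (by omega),
      swapK_demUp ℓ a k m (by omega) hm g hg]

lemma hdemUp_mul (ℓ a : ℕ) : ∀ k, a + k + 1 ≤ ℓ → ∀ g : Kf ℓ,
    hdemUp ℓ a k (Xv ℓ a * g) = Xv ℓ (a + k) * demUp ℓ a k g
  | 0, _, g => by simp [hdemUp, demUp]
  | k + 1, h, g => by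
    rw [hdemUp, hdemUp_mul ℓ a k (by omega) g, dem_mul_X ℓ (a + k) (by omega), demUp]
    ring_nf

noncomputable def Sacc (ℓ a : ℕ) (F : Kf ℓ) : ℕ → Kf ℓ
  | 0 => 0
  | k + 1 => Xv ℓ (a + k) * demUp ℓ a k F + Sacc ℓ a F k

lemma swapK_Sacc (ℓ a : ℕ) (F : Kf ℓ)
    (hsymF : ∀ m, a < m → m + 1 < ℓ → swapK ℓ m F = F) :
    ∀ k m, a < m → a + k ≤ m → m + 1 < ℓ → swapK ℓ m (Sacc ℓ a F k) = Sacc ℓ a F k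
  | 0, m, _, _, _ => by simp [Sacc]
  | k + 1, m, ham, hkm, hm => by
    rw [Sacc, map_add, map_mul, swapK_Xv_other ℓ m (a + k) hm (by omega) (by omega),
      swapK_demUp ℓ a k m (by omega) hm F (hsymF m ham hm),
      swapK_Sacc ℓ a F hsymF k m ham (by omega) hm]

lemma demUp_mul (ℓ a : ℕ) (F : Kf ℓ)
    (hsymF : ∀ m, a < m → m + 1 < ℓ → swapK ℓ m F = F) :
    ∀ k, a + k + 2 ≤ ℓ →
      demUp ℓ a k (Xv ℓ a * F) = Xv ℓ (a + k) * demUp ℓ a k F + Sacc ℓ a F k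
  | 0, _ => by simp [demUp, Sacc]
  | k + 1, h => by
    rw [demUp, demUp_mul ℓ a F hsymF k (by omega), dem_add,
      dem_mul_X ℓ (a + k) (by omega)]
    have hS : dem ℓ (a + k) (Sacc ℓ a F k) = Sacc ℓ a F k := by
      rcases Nat.eq_zero_or_pos k with hk | hk
      · subst hk; simp [Sacc, dem_zero]
      · exact dem_invariant ℓ (a + k) (by omega) _
          (swapK_Sacc ℓ a F hsymF k (a + k) (by omega) le_rfl (by omega))
    rw [hS, Sacc, demUp]
    ring_nf

/-- Suppose `f ∈ ℤ[x_1, …, x_ℓ]` is symmetric in `x_i, x_{i+1}` for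
all `a < i ≤ ℓ-1` (paper indexing; with variables indexed `0, …, ℓ-1` this means
`s_j f = f` for all `a < j` with `j + 1 < ℓ`, where `a` is the 0-indexed position).
Then `x_ℓ · π_{ℓ-1} π_{ℓ-2} ⋯ π_a (f) = (π_{ℓ-1}-1)(π_{ℓ-2}-1) ⋯ (π_a-1)(x_a · f)`,
and moreover this equals `(π_{ℓ-1}-1) π_{ℓ-2} ⋯ π_a (x_a · f)`. -/
theorem demazure_chain_top_var (ℓ a : ℕ) (ha : a + 1 < ℓ) (f : MvPolynomial (Fin ℓ) ℤ)
    (hsym : ∀ j : ℕ, a < j → j + 1 < ℓ → swapAlg ℓ j f = f) :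
    (Xv ℓ (ℓ - 1) * demUp ℓ a (ℓ - 1 - a) (algebraMap (MvPolynomial (Fin ℓ) ℤ) (Kf ℓ) f) =
        hdemUp ℓ a (ℓ - 1 - a) (Xv ℓ a * algebraMap (MvPolynomial (Fin ℓ) ℤ) (Kf ℓ) f)) ∧
      hdemUp ℓ a (ℓ - 1 - a) (Xv ℓ a * algebraMap (MvPolynomial (Fin ℓ) ℤ) (Kf ℓ) f) =
        dem ℓ (ℓ - 2)
            (demUp ℓ a (ℓ - 2 - a) (Xv ℓ a * algebraMap (MvPolynomial (Fin ℓ) ℤ) (Kf ℓ) f)) -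
          demUp ℓ a (ℓ - 2 - a) (Xv ℓ a * algebraMap (MvPolynomial (Fin ℓ) ℤ) (Kf ℓ) f) := by
  set F := algebraMap (MvPolynomial (Fin ℓ) ℤ) (Kf ℓ) f with hF
  have hsymF : ∀ m, a < m → m + 1 < ℓ → swapK ℓ m F = F := by
    intro m h1 h2
    rw [hF, swapK_algebraMap, hsym m h1 h2]
  set n := ℓ - 1 - a with hn
  set k₀ := ℓ - 2 - a with hk₀
  have hank : a + n = ℓ - 1 := by omega
  have hak : a + k₀ = ℓ - 2 := by omega
  have hkn : k₀ + 1 = n := by omega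
  have part1 : Xv ℓ (ℓ - 1) * demUp ℓ a n F = hdemUp ℓ a n (Xv ℓ a * F) := by
    rw [hdemUp_mul ℓ a n (by omega) F, hank]
  refine ⟨part1, ?_⟩
  rw [← part1, demUp_mul ℓ a F hsymF k₀ (by omega), hak, dem_add,
    dem_mul_X ℓ (ℓ - 2) (by omega)]
  have hS : dem ℓ (ℓ - 2) (Sacc ℓ a F k₀) = Sacc ℓ a F k₀ := by
    rcases Nat.eq_zero_or_pos k₀ with hk | hk
    · rw [hk]; simp [Sacc, dem_zero]
    · exact dem_invariant ℓ (ℓ - 2) (by omega) _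
        (swapK_Sacc ℓ a F hsymF k₀ (ℓ - 2) (by omega) (by omega) (by omega))
  rw [hS]
  have hdU : demUp ℓ a n F = dem ℓ (ℓ - 2) (demUp ℓ a k₀ F) := by
    rw [← hkn, demUp, hak]
  rw [hdU, show ℓ - 2 + 1 = ℓ - 1 by omega]
  ring
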